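/- arXiv:1410.0398 — 4 statements merged into one kernel-verified Lean document; each statement's English description precedes it below -/
import Mathlib

section
/- Let Λ ⊆ Z^d be a finite connected set with |Λ| ≥ 2 and λ_1, …, λ_d > 0. Suppose a : {X ⊆ Λ : |X| = N} → C with N ≥ 2 satisfies: (i) a(X) = 0 whenever X contains a nearest-neighbor pair, and (ii) for every X with |X| = N, every x ∈ X and every nearest neighbor x' = x ± e_k of x with x' ∈ Λ \ X, a((X \ {x}) ∪ {x'}) = λ_k^{±1} a(X). Then a(X) = 0 for all X. -/
/-!
Fix two particles `x ≠ y` of a configuration `X` and a path from `x` to `y` inside `Λ`. Walk the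
particle at `x` along the path: if the next site is occupied, `X` contains a nearest-neighbor pair
and `a X = 0`; otherwise the hopping relation `a X' = λ^{±1} a X` with `λ > 0` reduces `a X = 0`
to the same claim for the moved configuration `X'`, whose walking particle is one step closer
to `y`.
-/

noncomputable section

abbrev Site (d : ℕ) := Fin d → ℤ

def unitVec (d : ℕ) (k : Fin d) : Site d := fun j => if j = k then 1 else 0

def Adj {d : ℕ} (x y : Site d) : Prop := ∃ k, y = x + unitVec d k ∨ x = y + unitVec d k

/-- `Λ` is connected in the nearest-neighbor graph of `ℤ^d`. -/
def ConnectedIn {d : ℕ} (Λ : Finset (Site d)) : Prop :=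
  ∀ x ∈ Λ, ∀ y ∈ Λ, Relation.ReflTransGen (fun u v => v ∈ Λ ∧ Adj u v) x y

namespace Finset

variable {α : Type*} [DecidableEq α]

theorem card_insert_erase_of_mem_of_notMem {X : Finset α} {x u : α} (hx : x ∈ X) (hu : u ∉ X) :
    (insert u (X.erase x)).card = X.card := by
  rw [card_insert_of_notMem fun h => hu (mem_of_mem_erase h), card_erase_add_one hx]

end Finset

section Exclusion

open Finset

variable {α M : Type*} [DecidableEq α] [Zero M] {Λ : Finset α} {R : α → α → Prop} {N : ℕ}
  {a : Finset α → M}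

theorem eq_zero_of_reflTransGen
    (hpair : ∀ X ⊆ Λ, X.card = N → ∀ x ∈ X, ∀ u ∈ X, R x u → a X = 0)
    (hhop : ∀ X ⊆ Λ, X.card = N → ∀ x ∈ X, ∀ u ∈ Λ, u ∉ X → R x u →
      a (insert u (X.erase x)) = 0 → a X = 0)
    {x y : α} (hxy : Relation.ReflTransGen (fun u v => v ∈ Λ ∧ R u v) x y) :
    ∀ X ⊆ Λ, X.card = N → x ∈ X → y ∈ X → x ≠ y → a X = 0 := by
  induction hxy using Relation.ReflTransGen.head_induction_on with
  | refl => exact fun _ _ _ _ _ hne => absurd rfl hne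
  | @head x u hstep _ ih =>
    intro X hXΛ hXcard hxX hyX hne
    obtain ⟨huΛ, hxu⟩ := hstep
    by_cases huX : u ∈ X
    · exact hpair X hXΛ hXcard x hxX u huX hxu
    refine hhop X hXΛ hXcard x hxX u huΛ huX hxu (ih _ ?_ ?_ (mem_insert_self _ _) ?_ ?_)
    · exact insert_subset huΛ ((erase_subset _ _).trans hXΛ)
    · rw [Finset.card_insert_erase_of_mem_of_notMem hxX huX, hXcard]
    · exact mem_insert_of_mem (mem_erase.mpr ⟨Ne.symm hne, hyX⟩)
    · rintro rfl
      exact huX hyX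

end Exclusion

theorem Adj.exists_eq_add_zsmul_unitVec {d : ℕ} {x u : Site d} (h : Adj x u) :
    ∃ k, ∃ p : ℤ, (p = 1 ∨ p = -1) ∧ u = x + p • unitVec d k := by
  obtain ⟨k, h | h⟩ := h
  · exact ⟨k, 1, Or.inl rfl, by simpa using h⟩
  · exact ⟨k, -1, Or.inr rfl, by rw [h]; module⟩

theorem Adj.exists_add_unitVec_mem {d : ℕ} {X : Finset (Site d)} {x u : Site d} (h : Adj x u)
    (hx : x ∈ X) (hu : u ∈ X) : ∃ z ∈ X, ∃ k, z + unitVec d k ∈ X := by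
  obtain ⟨k, h | h⟩ := h
  · exact ⟨x, hx, k, h ▸ hu⟩
  · exact ⟨u, hu, k, h ▸ hx⟩

theorem no_multiparticle_ground_states_general {d : ℕ} (Λ : Finset (Site d))
    (hconn : ConnectedIn Λ)
    (lam : Fin d → ℝ) (hlam : ∀ k, 0 < lam k)
    (N : ℕ) (hN : 2 ≤ N) (a : Finset (Site d) → ℂ)
    (hnn : ∀ X ⊆ Λ, X.card = N → (∃ x ∈ X, ∃ k : Fin d, x + unitVec d k ∈ X) → a X = 0)
    (hhop : ∀ X ⊆ Λ, X.card = N → ∀ x ∈ X, ∀ k : Fin d, ∀ p : ℤ, (p = 1 ∨ p = -1) →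
      x + p • unitVec d k ∈ Λ → x + p • unitVec d k ∉ X →
      a (insert (x + p • unitVec d k) (X.erase x)) = (lam k : ℂ) ^ p * a X) :
    ∀ X ⊆ Λ, X.card = N → a X = 0 := by
  have hpair : ∀ X ⊆ Λ, X.card = N → ∀ x ∈ X, ∀ u ∈ X, Adj x u → a X = 0 :=
    fun X hXΛ hXcard x hx u hu hxu => hnn X hXΛ hXcard (hxu.exists_add_unitVec_mem hx hu)
  have hhop_zero : ∀ X ⊆ Λ, X.card = N → ∀ x ∈ X, ∀ u ∈ Λ, u ∉ X → Adj x u →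
      a (insert u (X.erase x)) = 0 → a X = 0 := by
    intro X hXΛ hXcard x hx u huΛ huX hxu hmoved
    obtain ⟨k, p, hp, rfl⟩ := hxu.exists_eq_add_zsmul_unitVec
    have hlam_ne : (lam k : ℂ) ^ p ≠ 0 := zpow_ne_zero _ (by exact_mod_cast (hlam k).ne')
    rw [hhop X hXΛ hXcard x hx k p hp huΛ huX] at hmoved
    exact (mul_eq_zero.mp hmoved).resolve_left hlam_ne
  intro X hXΛ hXcard
  obtain ⟨x, hx, y, hy, hxy⟩ := Finset.one_lt_card.mp (by omega : 1 < X.card)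
  exact eq_zero_of_reflTransGen hpair hhop_zero (hconn x (hXΛ hx) y (hXΛ hy))
    X hXΛ hXcard hx hy hxy

/-- no `N`-particle ground states for `N ≥ 2`.  If the coefficients
`a(X)` (for `X ⊆ Λ`, `|X| = N`) vanish on configurations containing a nearest-neighbor pair,
and satisfy the hopping relations `a((X∖{x})∪{x±e_k}) = λ_k^{±1} a(X)`, then `a ≡ 0`. -/
theorem no_multiparticle_ground_states {d : ℕ} (Λ : Finset (Site d))
    (hconn : ConnectedIn Λ) (hcard : 2 ≤ Λ.card)
    (lam : Fin d → ℝ) (hlam : ∀ k, 0 < lam k)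
    (N : ℕ) (hN : 2 ≤ N) (a : Finset (Site d) → ℂ)
    (hnn : ∀ X ⊆ Λ, X.card = N → (∃ x ∈ X, ∃ k : Fin d, x + unitVec d k ∈ X) → a X = 0)
    (hhop : ∀ X ⊆ Λ, X.card = N → ∀ x ∈ X, ∀ k : Fin d, ∀ p : ℤ, (p = 1 ∨ p = -1) →
      x + p • unitVec d k ∈ Λ → x + p • unitVec d k ∉ X →
      a (insert (x + p • unitVec d k) (X.erase x)) = (lam k : ℂ) ^ p * a X) :
    ∀ X ⊆ Λ, X.card = N → a X = 0 :=
  no_multiparticle_ground_states_general Λ hconn lam hlam N hN a hnn hhop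

end
end

section
/- For the one-species PVBS model on a finite connected Λ ⊆ Z^d with parameters λ_1,…,λ_d > 0, the kernel of the Hamiltonian H_Λ = Σ_k Σ_{x, x+e_k ∈ Λ} h^{(k)}_{x,x+e_k} is exactly two-dimensional, spanned by the all-zero product vector ψ_0 = ⊗_{x∈Λ}|0⟩ and the one-particle vector ψ_1 = C(Λ)^{-1/2} Σ_{x∈Λ} λ^x ξ_{{x}}, where C(Λ) = Σ_{x∈Λ} λ^{2x}. -/
open scoped BigOperators

noncomputable section

abbrev Cfg {d : ℕ} (Λ : Finset (Site d)) := (↑Λ : Type) → Bool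

abbrev HSp {d : ℕ} (Λ : Finset (Site d)) := EuclideanSpace ℂ (Cfg Λ)

/-- One-particle basis vector with the particle at site `x`. -/
def ksi {d : ℕ} {Λ : Finset (Site d)} (x : ↑Λ) : HSp Λ :=
  WithLp.toLp 2 (fun σ => if σ = (fun (y : ↑Λ) => decide ((y : Site d) = (x : Site d))) then 1 else 0)

/-- The all-zero (vacuum) product vector. -/
def vac {d : ℕ} (Λ : Finset (Site d)) : HSp Λ :=
  WithLp.toLp 2 (fun σ => if σ = (fun _ => false) then 1 else 0)

/-- The PVBS nearest-neighbor interaction `|11><11| + |φ̂><φ̂|` acting on the bond `(x, y)`. -/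
def hop {d : ℕ} {Λ : Finset (Site d)} (lam : ℝ) (x y : ↑Λ) (ψ : HSp Λ) : HSp Λ :=
  WithLp.toLp 2 (fun σ =>
    (if σ x = true ∧ σ y = true then ψ σ else 0) +
    (if σ x = false ∧ σ y = true then
        (ψ (Function.update (Function.update σ x false) y true)
          - (lam : ℂ) * ψ (Function.update (Function.update σ x true) y false)) / (1 + (lam : ℂ)^2)
     else if σ x = true ∧ σ y = false then
        -(lam : ℂ) * ((ψ (Function.update (Function.update σ x false) y true)
          - (lam : ℂ) * ψ (Function.update (Function.update σ x true) y false)) / (1 + (lam : ℂ)^2))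
     else 0))

/-- The PVBS Hamiltonian on `Λ`: sum of the bond interactions over all nearest-neighbor
bonds `(x, x + e_k)` contained in `Λ`. -/
def Ham {d : ℕ} (Λ : Finset (Site d)) (lam : Fin d → ℝ) (ψ : HSp Λ) : HSp Λ :=
  WithLp.toLp 2 (fun σ => ∑ k : Fin d, ∑ x : ↑Λ,
    (if h : ((x : Site d) + unitVec d k) ∈ Λ then
        hop (lam k) x ⟨(x : Site d) + unitVec d k, h⟩ ψ σ else 0))

/-- `λ^x = ∏_k λ_k^{x_k}`. -/
def lamPow {d : ℕ} (lam : Fin d → ℝ) (x : Site d) : ℝ := ∏ k, (lam k) ^ (x k)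

/-- `C(Λ) = ∑_{x∈Λ} λ^{2x}`. -/
def CC {d : ℕ} (lam : Fin d → ℝ) (Λ : Finset (Site d)) : ℝ := ∑ x ∈ Λ, (lamPow lam x)^2

/-- The normalized one-particle ground state vector. -/
def psi1 {d : ℕ} (Λ : Finset (Site d)) (lam : Fin d → ℝ) : HSp Λ :=
  WithLp.toLp 2 (fun σ => (Real.sqrt (CC lam Λ) : ℂ)⁻¹ * ∑ x : ↑Λ, ((lamPow lam x : ℝ) : ℂ) * ksi x σ)

/-!
Each bond term is positive semidefinite: `⟪ψ, h_xy ψ⟫` is the sum of `|ψ σ|²` over configurations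
occupying both `x` and `y` and of `|ψ σ - λ ψ σ'|² / (1 + λ²)` over those occupying only `y`, where
`σ'` moves that particle to `x`. So `H ψ = 0` iff on every bond `ψ` vanishes on doubly occupied
configurations and obeys `ψ σ = λ_k ψ σ'`. Walking along paths of the connected set `Λ`, the second
condition moves a particle next to another one, so `ψ` vanishes on all configurations with two or
more particles, and it forces `ψ(ξ_{x}) / λ^x` to be constant. The vacuum amplitude is
unconstrained, so the kernel is spanned by `ψ₀` and `ψ₁`.
-/

section PVBS

variable {d : ℕ} {Λ : Finset (Site d)}

open Equiv ComplexConjugate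

lemma update_update_eq_comp_swap {α β : Type*} [DecidableEq α] (f : α → β) (x y : α) :
    Function.update (Function.update f x (f y)) y (f x) = f ∘ swap x y := by
  rw [swap_comm, comp_swap_eq_update]

@[simp]
lemma comp_swap_comp_swap {α β : Type*} [DecidableEq α] (f : α → β) (x y : α) :
    (f ∘ swap x y) ∘ swap x y = f := by
  ext; simp [swap_apply_self]

lemma hop_apply (l : ℝ) {x y : ↑Λ} (ψ : HSp Λ) (σ : Cfg Λ) :
    hop l x y ψ σ =
      (if σ x = true ∧ σ y = true then ψ σ else 0) +
      (if σ x = false ∧ σ y = true then (ψ σ - l * ψ (σ ∘ swap x y)) / (1 + (l : ℂ) ^ 2)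
       else if σ x = true ∧ σ y = false then
         -l * ((ψ (σ ∘ swap x y) - l * ψ σ) / (1 + (l : ℂ) ^ 2))
       else 0) := by
  have hself : Function.update (Function.update σ x (σ x)) y (σ y) = σ := by simp
  have hswap := update_update_eq_comp_swap σ x y
  rcases hx : σ x <;> rcases hy : σ y <;> rw [hx, hy] at hself hswap <;>
    simp [hop, hx, hy, hself, hswap]

/-- The kernel of `hop l x y`. -/
def bondGround (l : ℝ) (x y : ↑Λ) : Submodule ℂ (HSp Λ) where
  carrier := {ψ | (∀ σ : Cfg Λ, σ x = true → σ y = true → ψ σ = 0) ∧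
    ∀ σ : Cfg Λ, σ x = false → σ y = true → ψ σ = l * ψ (σ ∘ swap x y)}
  add_mem' := by
    rintro ψ φ ⟨hψ₁, hψ₂⟩ ⟨hφ₁, hφ₂⟩
    refine ⟨fun σ hx hy => ?_, fun σ hx hy => ?_⟩
    · simp [hψ₁ σ hx hy, hφ₁ σ hx hy]
    · simp [hψ₂ σ hx hy, hφ₂ σ hx hy, mul_add]
  zero_mem' := by simp
  smul_mem' := by
    rintro c ψ ⟨hψ₁, hψ₂⟩
    refine ⟨fun σ hx hy => ?_, fun σ hx hy => ?_⟩
    · simp [hψ₁ σ hx hy]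
    · simp [hψ₂ σ hx hy, mul_left_comm]

lemma hop_eq_zero_of_mem_bondGround {l : ℝ} {x y : ↑Λ} {ψ : HSp Λ} (h : ψ ∈ bondGround l x y) :
    hop l x y ψ = 0 := by
  obtain ⟨h₁, h₂⟩ := h
  ext σ
  rw [hop_apply l]
  rcases hx : σ x <;> rcases hy : σ y
  · simp
  · simp [h₂ σ hx hy]
  · have := h₂ (σ ∘ swap x y) (by simp [hy]) (by simp [hx])
    simp [this]
  · simp [h₁ σ hx hy]

def bondEnergy (l : ℝ) (x y : ↑Λ) (ψ : HSp Λ) : ℝ :=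
  ∑ σ : Cfg Λ, ((if σ x = true ∧ σ y = true then ‖ψ σ‖ ^ 2 else 0) +
    if σ x = false ∧ σ y = true then
      ‖ψ σ - l * ψ (σ ∘ swap x y)‖ ^ 2 / (1 + l ^ 2) else 0)

lemma bondEnergy_nonneg (l : ℝ) (x y : ↑Λ) (ψ : HSp Λ) : 0 ≤ bondEnergy l x y ψ :=
  Finset.sum_nonneg fun σ _ => by positivity

lemma mem_bondGround_of_bondEnergy_eq_zero {l : ℝ} {x y : ↑Λ} {ψ : HSp Λ}
    (h : bondEnergy l x y ψ = 0) : ψ ∈ bondGround l x y := by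
  have hσ := (Finset.sum_eq_zero_iff_of_nonneg fun σ _ => by positivity).1 h
  refine ⟨fun σ hx hy => ?_, fun σ hx hy => ?_⟩
  · simpa [hx, hy] using hσ σ (Finset.mem_univ _)
  · have := hσ σ (Finset.mem_univ _)
    simp only [hx, hy] at this
    simpa [sub_eq_zero, (by positivity : (1 + l ^ 2 : ℝ) ≠ 0)] using this

lemma inner_hop_self (l : ℝ) (x y : ↑Λ) (ψ : HSp Λ) :
    inner ℂ ψ (hop l x y ψ) = bondEnergy l x y ψ := by
  simp only [PiLp.inner_apply, RCLike.inner_apply, mul_comm (hop l x y ψ _)]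
  -- Reindexed by the swap, the terms with `σ x = true, σ y = false` pair up with those with
  -- `σ x = false, σ y = true` into squares.
  let τ : Cfg Λ → Cfg Λ := (· ∘ swap x y)
  let C : Cfg Λ → ℂ := fun σ => if σ x = true ∧ σ y = false then
    conj (ψ σ) * (-l * ((ψ (τ σ) - l * ψ σ) / (1 + (l : ℂ) ^ 2))) else 0
  have hC : ∑ σ, C (τ σ) = ∑ σ, C σ :=
    Equiv.sum_comp ⟨τ, τ, fun σ => by simp [τ], fun σ => by simp [τ]⟩ C
  calc ∑ σ, conj (ψ σ) * hop l x y ψ σ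
      = ∑ σ, (conj (ψ σ) * hop l x y ψ σ - C σ + C (τ σ)) := by
        rw [Finset.sum_add_distrib, Finset.sum_sub_distrib, hC]; ring
    _ = bondEnergy l x y ψ := by
        rw [bondEnergy, Complex.ofReal_sum]
        refine Finset.sum_congr rfl fun σ _ => ?_
        rw [hop_apply]
        rcases hx : σ x <;> rcases hy : σ y
        · simp [C, τ, hx, hy]
        · simp [C, τ, hx, hy, ← Complex.conj_mul']
          field_simp
          ring
        · simp [C, τ, hx, hy]
        · simp [C, τ, hx, hy, Complex.conj_mul']

def groundSpace (Λ : Finset (Site d)) (lam : Fin d → ℝ) : Submodule ℂ (HSp Λ) :=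
  ⨅ (k : Fin d) (x : ↑Λ) (h : (x : Site d) + unitVec d k ∈ Λ), bondGround (lam k) x ⟨_, h⟩

lemma Ham_eq_sum (lam : Fin d → ℝ) (ψ : HSp Λ) :
    Ham Λ lam ψ = ∑ k, ∑ x : ↑Λ,
      if h : (x : Site d) + unitVec d k ∈ Λ then hop (lam k) x ⟨_, h⟩ ψ else 0 := by
  ext σ
  simp [Ham, apply_dite, dite_apply, -Finset.univ_eq_attach]

theorem Ham_eq_zero_iff (lam : Fin d → ℝ) (ψ : HSp Λ) :
    Ham Λ lam ψ = 0 ↔ ψ ∈ groundSpace Λ lam := by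
  simp only [groundSpace, Submodule.mem_iInf]
  constructor
  · intro h k x hx
    have hE := congrArg Complex.re (inner_zero_right (𝕜 := ℂ) ψ)
    rw [← h, Ham_eq_sum] at hE
    simp only [inner_sum, apply_dite (inner ℂ ψ), inner_hop_self, inner_zero_right,
      Complex.re_sum, apply_dite Complex.re, Complex.ofReal_re, Complex.zero_re] at hE
    have hnn : ∀ k (x : ↑Λ), 0 ≤ if h : (x : Site d) + unitVec d k ∈ Λ then
        bondEnergy (lam k) x ⟨_, h⟩ ψ else 0 := fun k x => by
      split_ifs
      exacts [bondEnergy_nonneg .., le_rfl]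
    have h0 := (Fintype.sum_eq_zero_iff_of_nonneg fun k =>
      Finset.sum_nonneg fun x _ => hnn k x).1 hE
    have := congrFun ((Fintype.sum_eq_zero_iff_of_nonneg (hnn k)).1 (congrFun h0 k)) x
    simp only [hx, dif_pos] at this
    exact mem_bondGround_of_bondEnergy_eq_zero this
  · intro h
    rw [Ham_eq_sum]
    refine Finset.sum_eq_zero fun k _ => Finset.sum_eq_zero fun x _ => ?_
    split_ifs with hx
    exacts [hop_eq_zero_of_mem_bondGround (h k x hx), rfl]

def singleCfg (x : ↑Λ) : Cfg Λ := fun y => decide (y = x)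

@[simp]
lemma singleCfg_apply (x y : ↑Λ) : singleCfg x y = decide (y = x) := rfl

lemma singleCfg_injective : Function.Injective (singleCfg (Λ := Λ)) := fun x y h => by
  simpa using congrFun h x

lemma singleCfg_comp_swap (z x y : ↑Λ) : singleCfg z ∘ swap x y = singleCfg (swap x y z) := by
  ext w
  simp [swap_apply_eq_iff]

lemma ksi_apply (x : ↑Λ) (σ : Cfg Λ) : ksi x σ = if σ = singleCfg x then 1 else 0 := by
  simp only [ksi, WithLp.ofLp_toLp, Subtype.coe_inj]
  rfl

lemma eq_of_singleCfg_apply {z w : ↑Λ} (h : singleCfg z w = true) : w = z := by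
  simpa using h

lemma cfg_cases (σ : Cfg Λ) :
    σ = (fun _ => false) ∨ (∃ z, σ = singleCfg z) ∨
      ∃ u v, u ≠ v ∧ σ u = true ∧ σ v = true := by
  by_cases h₁ : ∃ u, σ u = true
  · obtain ⟨u, hu⟩ := h₁
    by_cases h₂ : ∃ v, v ≠ u ∧ σ v = true
    · obtain ⟨v, hvu, hv⟩ := h₂
      exact Or.inr (Or.inr ⟨u, v, hvu.symm, hu, hv⟩)
    · push Not at h₂
      refine Or.inr (Or.inl ⟨u, funext fun w => ?_⟩)
      by_cases hw : w = u
      · simp [hw, hu]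
      · simpa [hw] using h₂ w hw
  · push Not at h₁
    exact Or.inl (funext fun w => by simpa using h₁ w)

lemma vac_apply_of_apply_eq_true {σ : Cfg Λ} {u : ↑Λ} (hu : σ u = true) : vac Λ σ = 0 := by
  simp only [vac, WithLp.ofLp_toLp, ite_eq_right_iff]
  rintro rfl
  simp at hu

lemma vac_apply_singleCfg (z : ↑Λ) : vac Λ (singleCfg z) = 0 :=
  vac_apply_of_apply_eq_true (u := z) (by simp)

lemma vac_apply_empty : vac Λ (fun _ => false) = 1 := by
  simp [vac]

lemma psi1_apply (lam : Fin d → ℝ) (σ : Cfg Λ) :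
    psi1 Λ lam σ = (Real.sqrt (CC lam Λ) : ℂ)⁻¹ *
      ∑ x : ↑Λ, (lamPow lam x : ℂ) * if σ = singleCfg x then 1 else 0 := by
  simp [psi1, ksi_apply]

lemma psi1_apply_singleCfg (lam : Fin d → ℝ) (z : ↑Λ) :
    psi1 Λ lam (singleCfg z) = (Real.sqrt (CC lam Λ) : ℂ)⁻¹ * lamPow lam z := by
  simp [psi1_apply, singleCfg_injective.eq_iff]

lemma psi1_apply_of_ne (lam : Fin d → ℝ) {σ : Cfg Λ} (h : ∀ z, σ ≠ singleCfg z) :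
    psi1 Λ lam σ = 0 := by
  simp [psi1_apply, h]

lemma psi1_apply_empty (lam : Fin d → ℝ) : psi1 Λ lam (fun _ => false) = 0 :=
  psi1_apply_of_ne lam fun z h => by simpa using congrFun h z

lemma psi1_apply_of_two (lam : Fin d → ℝ) {σ : Cfg Λ} {u v : ↑Λ} (huv : u ≠ v)
    (hu : σ u = true) (hv : σ v = true) : psi1 Λ lam σ = 0 :=
  psi1_apply_of_ne lam fun _ h =>
    huv ((eq_of_singleCfg_apply (h ▸ hu)).trans (eq_of_singleCfg_apply (h ▸ hv)).symm)

lemma lamPow_add_unitVec {lam : Fin d → ℝ} {k : Fin d} (hk : lam k ≠ 0) (x : Site d) :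
    lamPow lam (x + unitVec d k) = lamPow lam x * lam k := by
  have hfactor : ∀ j, lam j ^ (x + unitVec d k) j = lam j ^ x j * if j = k then lam j else 1 := by
    intro j
    by_cases hj : j = k
    · subst hj; simp [unitVec, zpow_add_one₀ hk]
    · simp [unitVec, hj]
  simp only [lamPow, hfactor, Finset.prod_mul_distrib, Finset.prod_ite_eq', Finset.mem_univ,
    if_true]

lemma self_ne_add_unitVec (x : Site d) (k : Fin d) : x ≠ x + unitVec d k := by
  intro h
  simpa [unitVec] using congrFun h k

lemma vac_mem_bondGround (l : ℝ) (x y : ↑Λ) : vac Λ ∈ bondGround l x y :=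
  ⟨fun _ hx _ => vac_apply_of_apply_eq_true hx, fun σ _ hy => by
    rw [vac_apply_of_apply_eq_true hy, vac_apply_of_apply_eq_true (u := x) (by simp [hy]),
      mul_zero]⟩

lemma psi1_mem_bondGround {lam : Fin d → ℝ} {k : Fin d} (hk : lam k ≠ 0) {x y : ↑Λ}
    (hxy : (y : Site d) = x + unitVec d k) : psi1 Λ lam ∈ bondGround (lam k) x y := by
  have hne : x ≠ y := fun h => self_ne_add_unitVec (x : Site d) k (by rw [← hxy, h])
  refine ⟨fun σ hx hy => psi1_apply_of_two lam hne hx hy, fun σ hx hy => ?_⟩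
  by_cases hσ : σ = singleCfg y
  · subst hσ
    rw [singleCfg_comp_swap, swap_apply_right, psi1_apply_singleCfg, psi1_apply_singleCfg, hxy,
      lamPow_add_unitVec hk]
    push_cast
    ring
  · have hsingle : ∀ z, σ ≠ singleCfg z := fun z h => hσ (eq_of_singleCfg_apply (h ▸ hy) ▸ h)
    have hswap : ∀ z, σ ∘ swap x y ≠ singleCfg z := fun z h => hsingle (swap x y z) (by
      rw [← singleCfg_comp_swap, ← h, comp_swap_comp_swap])
    rw [psi1_apply_of_ne lam hsingle, psi1_apply_of_ne lam hswap, mul_zero]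

lemma mem_bondGround_of_mem_groundSpace {lam : Fin d → ℝ} {ψ : HSp Λ}
    (hψ : ψ ∈ groundSpace Λ lam) {k : Fin d} {x y : ↑Λ} (hxy : (y : Site d) = x + unitVec d k) :
    ψ ∈ bondGround (lam k) x y := by
  obtain ⟨y, hy⟩ := y
  subst hxy
  exact Submodule.mem_iInf _ |>.1 (Submodule.mem_iInf _ |>.1 (Submodule.mem_iInf _ |>.1 hψ k) x) hy

lemma span_le_groundSpace {lam : Fin d → ℝ} (hlam : ∀ k, lam k ≠ 0) :
    Submodule.span ℂ {vac Λ, psi1 Λ lam} ≤ groundSpace Λ lam := by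
  simp only [Submodule.span_le, Set.insert_subset_iff, Set.singleton_subset_iff, SetLike.mem_coe,
    groundSpace, Submodule.mem_iInf]
  exact ⟨fun k x _ => vac_mem_bondGround _ _ _, fun k x _ => psi1_mem_bondGround (hlam k) rfl⟩

lemma bondGround_symm {l : ℝ} (hl : l ≠ 0) {x y : ↑Λ} {ψ : HSp Λ} (h : ψ ∈ bondGround l x y) :
    ψ ∈ bondGround l⁻¹ y x := by
  refine ⟨fun σ hy hx => h.1 σ hx hy, fun σ hy hx => ?_⟩
  have := h.2 (σ ∘ swap y x) (by simp [hy]) (by simp [hx])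
  rw [swap_comm x y, comp_swap_comp_swap] at this
  rw [this, Complex.ofReal_inv, inv_mul_cancel_left₀ (Complex.ofReal_ne_zero.2 hl)]

lemma exists_mem_bondGround_of_adj {lam : Fin d → ℝ} (hlam : ∀ k, lam k ≠ 0) {ψ : HSp Λ}
    (hψ : ψ ∈ groundSpace Λ lam) {a c : ↑Λ} (hac : Adj (a : Site d) c) :
    ∃ l ≠ 0, ψ ∈ bondGround l a c ∧ lamPow lam c = lamPow lam a * l := by
  obtain ⟨k, hk | hk⟩ := hac
  · exact ⟨lam k, hlam k, mem_bondGround_of_mem_groundSpace hψ hk, by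
      rw [hk, lamPow_add_unitVec (hlam k)]⟩
  · refine ⟨(lam k)⁻¹, inv_ne_zero (hlam k),
      bondGround_symm (hlam k) (mem_bondGround_of_mem_groundSpace hψ hk), ?_⟩
    rw [hk, lamPow_add_unitVec (hlam k), mul_inv_cancel_right₀ (hlam k)]

lemma Adj.symm {x y : Site d} (h : Adj x y) : Adj y x :=
  let ⟨k, hk⟩ := h; ⟨k, hk.symm⟩

lemma Adj.ne {x y : Site d} (h : Adj x y) : x ≠ y := by
  obtain ⟨k, rfl | rfl⟩ := h
  exacts [self_ne_add_unitVec x k, (self_ne_add_unitVec y k).symm]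

lemma ConnectedIn.eq_of_adj {α : Sort*} (hconn : ConnectedIn Λ) {f : ↑Λ → α}
    (hf : ∀ a b : ↑Λ, Adj (a : Site d) b → f a = f b) (a b : ↑Λ) : f a = f b := by
  suffices ∀ u, Relation.ReflTransGen (fun u v => v ∈ Λ ∧ Adj u v) u b →
      ∀ hu : u ∈ Λ, f ⟨u, hu⟩ = f b from this a (hconn a a.2 b b.2) a.2
  intro u hub
  induction hub using Relation.ReflTransGen.head_induction_on with
  | refl => exact fun _ => rfl
  | head hstep _ ih => exact fun hu => (hf ⟨_, hu⟩ ⟨_, hstep.1⟩ hstep.2).trans (ih hstep.1)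

section Kernel

variable {lam : Fin d → ℝ} {ψ : HSp Λ}

lemma apply_eq_zero_of_two_particles (hconn : ConnectedIn Λ) (hlam : ∀ k, lam k ≠ 0)
    (hψ : ψ ∈ groundSpace Λ lam) {σ : Cfg Λ} {u v : ↑Λ} (huv : u ≠ v) (hu : σ u = true)
    (hv : σ v = true) : ψ σ = 0 := by
  -- `P a` propagates along edges: hop the particle at `a` to an empty neighbour `c`, or, if `c`
  -- is occupied, use that no bond is doubly occupied.
  let P : ↑Λ → Prop := fun a => ∀ σ : Cfg Λ, σ a = true → σ v = true → a ≠ v → ψ σ = 0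
  have step : ∀ a c : ↑Λ, Adj (a : Site d) c → P c → P a := by
    intro a c hac hc σ ha hv hav
    obtain ⟨_, _, hψca, _⟩ := exists_mem_bondGround_of_adj hlam hψ (Adj.symm hac)
    cases hσc : σ c
    · have hvc : v ≠ c := by rintro rfl; simp [hv] at hσc
      rw [hψca.2 σ hσc ha, hc _ (by simp [ha]) (by simp [swap_apply_of_ne_of_ne hvc hav.symm, hv])
        hvc.symm, mul_zero]
    · exact hψca.1 σ hσc ha
  have hPv : P v := fun _ _ _ h => absurd rfl h
  have hPu : P u := ConnectedIn.eq_of_adj hconn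
    (fun a c hac => propext ⟨step c a (Adj.symm hac), step a c hac⟩) v u ▸ hPv
  exact hPu σ hu hv huv

lemma apply_singleCfg_div_lamPow_eq (hconn : ConnectedIn Λ) (hlam : ∀ k, lam k ≠ 0)
    (hψ : ψ ∈ groundSpace Λ lam) (a b : ↑Λ) :
    ψ (singleCfg a) / lamPow lam a = ψ (singleCfg b) / lamPow lam b := by
  refine ConnectedIn.eq_of_adj hconn (f := fun a => ψ (singleCfg a) / lamPow lam a)
    (fun a c hac => ?_) a b
  obtain ⟨l, hl, hψac, hpow⟩ := exists_mem_bondGround_of_adj hlam hψ hac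
  have hac' : a ≠ c := fun h => Adj.ne hac (congrArg Subtype.val h)
  rw [hψac.2 (singleCfg c) (by simp [hac']) (by simp), singleCfg_comp_swap, swap_apply_right, hpow]
  push_cast
  rw [mul_comm (l : ℂ), mul_div_mul_right _ _ (Complex.ofReal_ne_zero.2 hl)]

lemma lamPow_ne_zero (hlam : ∀ k, lam k ≠ 0) (x : Site d) : lamPow lam x ≠ 0 :=
  Finset.prod_ne_zero_iff.2 fun k _ => zpow_ne_zero _ (hlam k)

lemma sqrt_CC_ne_zero (hne : Λ.Nonempty) (hlam : ∀ k, lam k ≠ 0) :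
    (Real.sqrt (CC lam Λ) : ℂ) ≠ 0 := by
  have hpos : 0 < CC lam Λ := Finset.sum_pos (fun x _ => by
    have := lamPow_ne_zero hlam x; positivity) hne
  exact_mod_cast (Real.sqrt_pos.2 hpos).ne'

lemma groundSpace_le_span (hne : Λ.Nonempty) (hconn : ConnectedIn Λ) (hlam : ∀ k, lam k ≠ 0) :
    groundSpace Λ lam ≤ Submodule.span ℂ {vac Λ, psi1 Λ lam} := by
  intro ψ hψ
  obtain ⟨x₀⟩ := hne.coe_sort
  refine Submodule.mem_span_pair.2
    ⟨ψ (fun _ => false), Real.sqrt (CC lam Λ) * (ψ (singleCfg x₀) / lamPow lam x₀), ?_⟩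
  ext σ
  simp only [PiLp.add_apply, PiLp.smul_apply, smul_eq_mul]
  rcases cfg_cases σ with rfl | ⟨z, rfl⟩ | ⟨u, v, huv, hu, hv⟩
  · simp [vac_apply_empty, psi1_apply_empty]
  · rw [vac_apply_singleCfg, psi1_apply_singleCfg,
      apply_singleCfg_div_lamPow_eq hconn hlam hψ x₀ z]
    field_simp [sqrt_CC_ne_zero hne hlam, lamPow_ne_zero hlam]
    ring
  · rw [vac_apply_of_apply_eq_true hu, psi1_apply_of_two lam huv hu hv,
      apply_eq_zero_of_two_particles hconn hlam hψ huv hu hv]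
    ring

lemma linearIndependent_vac_psi1 (hne : Λ.Nonempty) (hlam : ∀ k, lam k ≠ 0) :
    LinearIndependent ℂ ![vac Λ, psi1 Λ lam] := by
  obtain ⟨x₀⟩ := hne.coe_sort
  refine LinearIndependent.pair_iff.2 fun s t hst => ?_
  have h₀ := congrArg (fun φ : HSp Λ => φ (fun _ => false)) hst
  have h₁ := congrArg (fun φ : HSp Λ => φ (singleCfg x₀)) hst
  exact ⟨by simpa [vac_apply_empty, psi1_apply_empty] using h₀,
    by simpa [vac_apply_singleCfg, psi1_apply_singleCfg, sqrt_CC_ne_zero hne hlam,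
      lamPow_ne_zero hlam] using h₁⟩

end Kernel

end PVBS

/-- on a finite connected `Λ ⊆ ℤ^d` with all `λ_k > 0`, the kernel of the
PVBS Hamiltonian is exactly the span of the vacuum `ψ₀` and the one-particle vector `ψ₁`,
and these two vectors are linearly independent (so the kernel is two-dimensional). -/
theorem pvbs_finite_ground_state_space {d : ℕ} (Λ : Finset (Site d)) (hne : Λ.Nonempty)
    (hconn : ConnectedIn Λ) (lam : Fin d → ℝ) (hlam : ∀ k, 0 < lam k) :
    (∀ ψ : HSp Λ, Ham Λ lam ψ = 0 ↔ ψ ∈ Submodule.span ℂ {vac Λ, psi1 Λ lam}) ∧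
    LinearIndependent ℂ ![vac Λ, psi1 Λ lam] := by
  have hlam' : ∀ k, lam k ≠ 0 := fun k => (hlam k).ne'
  have hground : groundSpace Λ lam = Submodule.span ℂ {vac Λ, psi1 Λ lam} :=
    le_antisymm (groundSpace_le_span hne hconn hlam') (span_le_groundSpace hlam')
  exact ⟨fun ψ => by rw [Ham_eq_zero_iff, hground], linearIndependent_vac_psi1 hne hlam'⟩

end
end

section
/- Fix λ > 0 with λ ≠ 1 and define c(λ, n) = Σ_{i=0}^n λ^{2i}. Then for every n ≥ 1, λ² c(λ, n-1) / ((1+λ²) c(λ, n)) ≤ ε(λ)² < 1/2, where ε(λ) = λ/√(1+λ²) if λ < 1 and ε(λ) = 1/√(1+λ²) if λ > 1. -/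
/-!
Since `c(λ, n) = 1 + λ² c(λ, n-1)` and `c(λ, n-1) ≤ c(λ, n)`, we get
`λ² c(λ, n-1) ≤ min(λ², 1) c(λ, n)`, so the ratio is at most `min(λ², 1) / (1 + λ²)`, which is
exactly `ε(λ)²`. This is `< 1/2` precisely because `λ² ≠ 1`.
-/

noncomputable section

/-- `c(λ, n) = ∑_{i=0}^n λ^{2i}`. -/
def cgeom (lam : ℝ) (n : ℕ) : ℝ := ∑ i ∈ Finset.range (n + 1), lam ^ (2 * i)

/-- `ε(λ) = λ/√(1+λ²)` if `λ < 1`, and `1/√(1+λ²)` if `λ > 1`. -/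
def eps (lam : ℝ) : ℝ :=
  if lam < 1 then lam / Real.sqrt (1 + lam ^ 2) else 1 / Real.sqrt (1 + lam ^ 2)

section

variable (lam : ℝ)

@[simp]
lemma cgeom_zero : cgeom lam 0 = 1 := by
  simp [cgeom]

lemma cgeom_succ (m : ℕ) : cgeom lam (m + 1) = 1 + lam ^ 2 * cgeom lam m := by
  rw [cgeom, Finset.sum_range_succ', cgeom, Finset.mul_sum, add_comm, mul_zero, pow_zero]
  exact congrArg _ (Finset.sum_congr rfl fun i _ => by ring)

lemma cgeom_succ_eq_add (m : ℕ) : cgeom lam (m + 1) = cgeom lam m + lam ^ (2 * (m + 1)) :=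
  Finset.sum_range_succ _ _

lemma cgeom_pos (m : ℕ) : 0 < cgeom lam m := by
  induction m with
  | zero => simp
  | succ m ih => rw [cgeom_succ]; positivity

lemma cgeom_le_cgeom_succ (m : ℕ) : cgeom lam m ≤ cgeom lam (m + 1) := by
  rw [cgeom_succ_eq_add, pow_mul]
  exact le_add_of_nonneg_right (by positivity)

lemma sq_mul_cgeom_le_min_mul_cgeom_succ (m : ℕ) :
    lam ^ 2 * cgeom lam m ≤ min (lam ^ 2) 1 * cgeom lam (m + 1) := by
  rw [min_mul_of_nonneg _ _ (cgeom_pos lam _).le, one_mul]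
  refine le_min ?_ ?_
  · exact mul_le_mul_of_nonneg_left (cgeom_le_cgeom_succ lam m) (sq_nonneg lam)
  · rw [cgeom_succ]
    linarith

lemma cgeom_ratio_le_min (m : ℕ) :
    lam ^ 2 * cgeom lam m / ((1 + lam ^ 2) * cgeom lam (m + 1)) ≤
      min (lam ^ 2) 1 / (1 + lam ^ 2) := by
  have hc := cgeom_pos lam (m + 1)
  calc lam ^ 2 * cgeom lam m / ((1 + lam ^ 2) * cgeom lam (m + 1))
      ≤ min (lam ^ 2) 1 * cgeom lam (m + 1) / ((1 + lam ^ 2) * cgeom lam (m + 1)) :=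
        div_le_div_of_nonneg_right (sq_mul_cgeom_le_min_mul_cgeom_succ lam m) (by positivity)
    _ = min (lam ^ 2) 1 / (1 + lam ^ 2) := mul_div_mul_right _ _ hc.ne'

lemma eps_sq_eq_min {lam : ℝ} (h : 0 ≤ lam) : eps lam ^ 2 = min (lam ^ 2) 1 / (1 + lam ^ 2) := by
  have hsqrt : Real.sqrt (1 + lam ^ 2) ^ 2 = 1 + lam ^ 2 := Real.sq_sqrt (by positivity)
  rw [eps]
  split_ifs with hlt
  · rw [div_pow, hsqrt, min_eq_left (pow_le_one₀ h hlt.le)]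
  · rw [div_pow, hsqrt, one_pow, min_eq_right (one_le_pow₀ (not_lt.1 hlt))]

lemma min_sq_one_div_lt_half {lam : ℝ} (h : lam ^ 2 ≠ 1) :
    min (lam ^ 2) 1 / (1 + lam ^ 2) < 1 / 2 := by
  rw [div_lt_div_iff₀ (by positivity) two_pos]
  rcases h.lt_or_gt with hlt | hgt
  · rw [min_eq_left hlt.le]; linarith
  · rw [min_eq_right hgt.le]; linarith

end

/-- for `λ > 0`, `λ ≠ 1` and all `n ≥ 1`,
`λ² c(λ,n-1) / ((1+λ²) c(λ,n)) ≤ ε(λ)² < 1/2`. -/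
theorem martingale_key_estimate (lam : ℝ) (hpos : 0 < lam) (hne : lam ≠ 1)
    (n : ℕ) (hn : 1 ≤ n) :
    lam ^ 2 * cgeom lam (n - 1) / ((1 + lam ^ 2) * cgeom lam n) ≤ (eps lam) ^ 2 ∧
    (eps lam) ^ 2 < 1 / 2 := by
  obtain ⟨m, rfl⟩ := Nat.exists_eq_add_of_le' hn
  have hsq : lam ^ 2 ≠ 1 := by
    rwa [← one_pow 2, Ne, pow_left_inj₀ hpos.le zero_le_one two_ne_zero]
  rw [eps_sq_eq_min hpos.le, Nat.add_sub_cancel]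
  exact ⟨cgeom_ratio_le_min lam m, min_sq_one_div_lt_half hsq⟩
end
end

section
/- Let Λ ⊆ Z^d be finite, λ_1,…,λ_d > 0, and define φ_Λ(z) = Σ_{x∈Λ} z^x ξ_{{x}} for z = (z_1,…,z_d) with all z_k ∈ (0,∞). Then for any x with x, x+e_k ∈ Λ, one has h^{(k)}_{x,x+e_k} φ_Λ(z) = (z^x (z_k - λ_k)/(1+λ_k²)) (ξ_{{x+e_k}} - λ_k ξ_{{x}}). Consequently, the total bulk energy satisfies Σ_k Σ_{x: x,x+e_k∈Λ} ⟨φ_Λ(z), h^{(k)}_{x,x+e_k} φ_Λ(z)⟩ = Σ_k Σ_{x: x,x+e_k∈Λ} z^{2x}(z_k - λ_k)²/(1+λ_k²), i.e. each bulk bond (x,x+e_k) with both endpoints in Λ contributes z^{2x}(z_k - λ_k)²/(1+λ_k²). -/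
open scoped BigOperators

noncomputable section

/-- The one-particle vector `φ_Λ(z) = ∑_{x∈Λ} z^x ξ_{{x}}`. -/
def onePart {d : ℕ} (Λ : Finset (Site d)) (z : Fin d → ℝ) : HSp Λ :=
  WithLp.toLp 2 (fun σ => ∑ x : ↑Λ, ((lamPow z x : ℝ) : ℂ) * ksi x σ)

-- auxiliary
def delta {d : ℕ} {Λ : Finset (Site d)} (w : ↑Λ) : Cfg Λ :=
  fun y => decide ((y : Site d) = (w : Site d))

lemma ksi_eq {d : ℕ} {Λ : Finset (Site d)} (w : ↑Λ) (σ : Cfg Λ) :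
    (ksi w : HSp Λ) σ = if σ = delta w then 1 else 0 := rfl

lemma delta_self {d : ℕ} {Λ : Finset (Site d)} (w : ↑Λ) : delta w w = true := by
  simp [delta]

lemma delta_ne {d : ℕ} {Λ : Finset (Site d)} {w v : ↑Λ} (h : v ≠ w) : delta w v = false := by
  simp only [delta, decide_eq_false_iff_not]
  exact fun e => h (Subtype.ext e)

lemma delta_inj {d : ℕ} {Λ : Finset (Site d)} : Function.Injective (delta (Λ := Λ)) := by
  intro a b h
  have := congrFun h a
  simp [delta] at this
  exact this

lemma onePart_delta {d : ℕ} (Λ : Finset (Site d)) (z : Fin d → ℝ) (w : ↑Λ) :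
    onePart Λ z (delta w) = ((lamPow z w : ℝ) : ℂ) := by
  unfold onePart
  show (∑ x : ↑Λ, ((lamPow z x : ℝ) : ℂ) * ksi x (delta w)) = _
  rw [Fintype.sum_eq_single w]
  · rw [ksi_eq, if_pos rfl, mul_one]
  · intro b hb
    rw [ksi_eq, if_neg (fun h => hb (delta_inj h).symm), mul_zero]

lemma onePart_not_single {d : ℕ} (Λ : Finset (Site d)) (z : Fin d → ℝ) (σ : Cfg Λ)
    (h : ∀ w, σ ≠ delta w) : onePart Λ z σ = 0 := by
  unfold onePart
  apply Finset.sum_eq_zero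
  intro w _
  rw [ksi_eq, if_neg (h w), mul_zero]

lemma lamPow_add_unit {d : ℕ} (z : Fin d → ℝ) (hz : ∀ k, 0 < z k) (x : Site d) (k : Fin d) :
    lamPow z (x + unitVec d k) = lamPow z x * z k := by
  have h : ∀ j, z j ^ ((x + unitVec d k) j) = z j ^ (x j) * (if j = k then z j else 1) := by
    intro j
    show z j ^ (x j + (if j = k then (1:ℤ) else 0)) = _
    rw [zpow_add₀ (ne_of_gt (hz j))]
    congr 1
    split <;> simp
  unfold lamPow
  simp only [h]
  rw [Finset.prod_mul_distrib, Finset.prod_ite_eq' Finset.univ k (fun j => z j)]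
  simp

-- swap lemma
lemma swap_delta {d : ℕ} {Λ : Finset (Site d)} {σ : Cfg Λ} {a b : ↑Λ} (hab : a ≠ b)
    (ha : σ a = true) (hb : σ b = false) :
    (Function.update (Function.update σ a false) b true = delta b ↔ σ = delta a) ∧
    (∀ w : ↑Λ, w ≠ b → Function.update (Function.update σ a false) b true ≠ delta w) := by
  classical
  constructor
  · constructor
    · intro h
      funext v
      by_cases hva : v = a
      · subst hva; rw [ha, delta_self]
      · by_cases hvb : v = b
        · subst hvb; rw [hb, delta_ne hva]
        · have := congrFun h v
          rw [Function.update_of_ne hvb, Function.update_of_ne hva] at this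
          rw [this, delta_ne hvb, delta_ne hva]
    · intro h
      funext v
      by_cases hvb : v = b
      · subst hvb; rw [Function.update_self, delta_self]
      · rw [Function.update_of_ne hvb]
        by_cases hva : v = a
        · subst hva; rw [Function.update_self, delta_ne hvb]
        · rw [Function.update_of_ne hva, h, delta_ne hva, delta_ne hvb]
  · intro w hw h
    have := congrFun h b
    rw [Function.update_self, delta_ne (Ne.symm hw)] at this
    simp at this


lemma ne_delta_of_false {d : ℕ} {Λ : Finset (Site d)} {σ : Cfg Λ} {w : ↑Λ}
    (h : σ w = false) : σ ≠ delta w := by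
  intro e; rw [e, delta_self] at h; cases h

lemma eq_delta_of_true {d : ℕ} {Λ : Finset (Site d)} {σ : Cfg Λ} {w v : ↑Λ}
    (e : σ = delta w) (h : σ v = true) : v = w := by
  by_contra hv; rw [e, delta_ne hv] at h; cases h

lemma ne_delta_of_true {d : ℕ} {Λ : Finset (Site d)} {σ : Cfg Λ} {w v : ↑Λ}
    (hv : v ≠ w) (h : σ v = true) : σ ≠ delta w := fun e => hv (eq_delta_of_true e h)

/-- for `z_k, λ_k ∈ (0,∞)` and any bond `(x, x+e_k)` in `Λ`,
`h^{(k)}_{x,x+e_k} φ_Λ(z) = (z^x (z_k−λ_k)/(1+λ_k²)) (ξ_{x+e_k} − λ_k ξ_x)`, and the bond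
energy is `⟨φ_Λ(z), h^{(k)}_{x,x+e_k} φ_Λ(z)⟩ = z^{2x} (z_k−λ_k)²/(1+λ_k²)`. -/
theorem pvbs_one_particle_bond_action {d : ℕ} (Λ : Finset (Site d))
    (lam z : Fin d → ℝ) (hlam : ∀ k, 0 < lam k) (hz : ∀ k, 0 < z k)
    (x : ↑Λ) (k : Fin d) (hk : ((x : Site d) + unitVec d k) ∈ Λ) :
    hop (lam k) x ⟨(x : Site d) + unitVec d k, hk⟩ (onePart Λ z) =
      ((lamPow z x * (z k - lam k) / (1 + (lam k) ^ 2) : ℝ) : ℂ) •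
        ((ksi ⟨(x : Site d) + unitVec d k, hk⟩ : HSp Λ) - (lam k : ℂ) • ksi x) ∧
    (inner ℂ (onePart Λ z) (hop (lam k) x ⟨(x : Site d) + unitVec d k, hk⟩ (onePart Λ z)) : ℂ) =
      (((lamPow z x) ^ 2 * (z k - lam k) ^ 2 / (1 + (lam k) ^ 2) : ℝ) : ℂ) := by
  classical
  set y : ↑Λ := ⟨(x : Site d) + unitVec d k, hk⟩ with hy
  have hxy : x ≠ y := by
    intro h
    have := congrFun (congrArg Subtype.val h) k
    simp [hy, unitVec] at this
  have hyx : y ≠ x := Ne.symm hxy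
  have hzx : lamPow z (y : Site d) = lamPow z x * z k := lamPow_add_unit z hz x k
  have hden : (1 + (lam k : ℂ)^2) ≠ 0 := by
    have h1 : (0:ℝ) < 1 + lam k ^ 2 := by positivity
    intro h
    have h2 : ((1 + lam k ^2 : ℝ) : ℂ) = 0 := by push_cast; linear_combination h
    exact absurd (Complex.ofReal_eq_zero.mp h2) (ne_of_gt h1)
  have part1 : hop (lam k) x y (onePart Λ z) =
      ((lamPow z x * (z k - lam k) / (1 + (lam k) ^ 2) : ℝ) : ℂ) •
        ((ksi y : HSp Λ) - (lam k : ℂ) • ksi x) := by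
    refine PiLp.ext (fun σ => ?_)
    show (if σ x = true ∧ σ y = true then onePart Λ z σ else 0) +
      (if σ x = false ∧ σ y = true then
        (onePart Λ z (Function.update (Function.update σ x false) y true)
          - (lam k : ℂ) * onePart Λ z (Function.update (Function.update σ x true) y false))
            / (1 + (lam k : ℂ)^2)
       else if σ x = true ∧ σ y = false then
        -(lam k : ℂ) * ((onePart Λ z (Function.update (Function.update σ x false) y true)
          - (lam k : ℂ) * onePart Λ z (Function.update (Function.update σ x true) y false))
            / (1 + (lam k : ℂ)^2))
       else 0) =
      ((lamPow z x * (z k - lam k) / (1 + (lam k) ^ 2) : ℝ) : ℂ) *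
        ((if σ = delta y then (1:ℂ) else 0) - (lam k : ℂ) * (if σ = delta x then (1:ℂ) else 0))
    cases hσx : σ x <;> cases hσy : σ y
    · -- both false
      rw [if_neg (by simp [hσx]), if_neg (by simp [hσy]), if_neg (by simp [hσy]),
        if_neg (ne_delta_of_false hσy), if_neg (ne_delta_of_false hσx)]
      ring
    · -- x false, y true
      have e1 : Function.update σ x false = σ := by rw [← hσx]; exact Function.update_eq_self x σ
      have e2 : Function.update σ y true = σ := by rw [← hσy]; exact Function.update_eq_self y σ
      have ecomm : Function.update (Function.update σ x true) y false
          = Function.update (Function.update σ y false) x true :=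
        Function.update_comm hxy true false σ
      have hswap := swap_delta hyx hσy hσx
      rw [if_neg (by simp), if_pos ⟨rfl, rfl⟩, e1, e2, ecomm]
      by_cases hσ : σ = delta y
      · have hτ : onePart Λ z (Function.update (Function.update σ y false) x true)
            = ((lamPow z x : ℝ) : ℂ) := by rw [hswap.1.2 hσ, onePart_delta]
        have hσ1 : onePart Λ z σ = ((lamPow z (y : Site d) : ℝ) : ℂ) := by
          rw [hσ, onePart_delta]
        rw [if_pos hσ, if_neg (ne_delta_of_false hσx), hσ1, hτ, hzx]
        push_cast
        field_simp
        try ring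
        try tauto
      · have hτ : ∀ w, Function.update (Function.update σ y false) x true ≠ delta w := by
          intro w
          by_cases hwx : w = x
          · subst hwx; exact fun e => hσ (hswap.1.1 e)
          · exact hswap.2 w hwx
        have h0 : ∀ w, σ ≠ delta w := by
          intro w e
          exact hσ (by rw [← eq_delta_of_true e hσy] at e; exact e)
        rw [if_neg hσ, if_neg (ne_delta_of_false hσx),
          onePart_not_single _ _ _ h0, onePart_not_single _ _ _ hτ]
        ring
    · -- x true, y false
      have e1 : Function.update σ x true = σ := by rw [← hσx]; exact Function.update_eq_self x σ
      have e2 : Function.update σ y false = σ := by rw [← hσy]; exact Function.update_eq_self y σ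
      have hswap := swap_delta hxy hσx hσy
      rw [if_neg (by simp), if_neg (by simp), if_pos ⟨rfl, rfl⟩, e1, e2,
        if_neg (ne_delta_of_false hσy)]
      by_cases hσ : σ = delta x
      · have hτ : onePart Λ z (Function.update (Function.update σ x false) y true)
            = ((lamPow z (y : Site d) : ℝ) : ℂ) := by rw [hswap.1.2 hσ, onePart_delta]
        have hσ1 : onePart Λ z σ = ((lamPow z (x : Site d) : ℝ) : ℂ) := by
          rw [hσ, onePart_delta]
        rw [if_pos hσ, hτ, hσ1, hzx]
        push_cast
        field_simp
        try ring
        try tauto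
      · have hτ : ∀ w, Function.update (Function.update σ x false) y true ≠ delta w := by
          intro w
          by_cases hwy : w = y
          · subst hwy; exact fun e => hσ (hswap.1.1 e)
          · exact hswap.2 w hwy
        have h0 : ∀ w, σ ≠ delta w := by
          intro w e
          exact hσ (by rw [← eq_delta_of_true e hσx] at e; exact e)
        rw [if_neg hσ, onePart_not_single _ _ _ hτ, onePart_not_single _ _ _ h0]
        ring
    · -- both true
      have h0 : ∀ w, σ ≠ delta w := by
        intro w e
        exact hxy ((eq_delta_of_true e hσx).trans (eq_delta_of_true e hσy).symm)
      rw [if_pos ⟨rfl, rfl⟩, if_neg (by simp), if_neg (by simp),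
        onePart_not_single _ _ _ h0, if_neg (h0 y), if_neg (h0 x)]
      ring
  refine ⟨part1, ?_⟩
  rw [part1, inner_smul_right, inner_sub_right, inner_smul_right]
  have hksi : ∀ w : ↑Λ, (inner ℂ (onePart Λ z) ((ksi w : HSp Λ)) : ℂ) = ((lamPow z w : ℝ) : ℂ) := by
    intro w
    rw [PiLp.inner_apply]
    simp only [RCLike.inner_apply', ksi_eq, mul_ite, mul_one, mul_zero]
    rw [Finset.sum_ite_eq' Finset.univ (delta w) (fun σ => (starRingEnd ℂ) (onePart Λ z σ)),
      if_pos (Finset.mem_univ _), onePart_delta, Complex.conj_ofReal]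
  rw [hksi, hksi, show lamPow z (y : Site d) = lamPow z x * z k from hzx]
  push_cast
  field_simp

end
end
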